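/- Let W* = Σ_{i=0}^D α*_i·E*_i with all α*_i ≠ 0, and assume the matrices E*_i·A·E*_j with 0 ≤ i,j ≤ D and |i−j| = 1 are linearly independent. Then W*·A·(W*)^{−1} = C if and only if α*_i = α*_0·(−1)^i·a^{−i}·q^{i(D−i)} for 0 ≤ i ≤ D (equivalently, α*_i/α*_{i−1} = −a^{−1}·q^{D−2i+1} for 1 ≤ i ≤ D). -/

import Mathlib

/-!
Write `M i j = E*_i A E*_j`. Since the `E*_i` are orthogonal idempotents summing to `1`, a matrix is
determined by its blocks `E*_i X E*_j`, and `(W*)⁻¹ = ∑ α*_i⁻¹ E*_i`. The `(i, j)` block of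
`W* A (W*)⁻¹` is `(α*_i / α*_j) M i j`, and that of `C` is `c i j M i j` for an explicit scalar
`c i j` with `c i i = 1`, `c i (i - 1) = -a⁻¹ q^(D-2i+1)` and `c (i - 1) i = (c i (i - 1))⁻¹`.
Blocks with `|i - j| > 1` vanish and those with `|i - j| = 1` are nonzero by linear independence,
so `W* A (W*)⁻¹ = C` exactly when `α*_i / α*_(i-1) = -a⁻¹ q^(D-2i+1)`; this ratio condition
telescopes to the closed form.
-/

open Matrix Finset

section Scalars

variable {K : Type*} [Field K] {q : K}

theorem add_inv_ne_zero_of_sq_ne_neg_one (hq : q ≠ 0) (h : q ^ 2 ≠ -1) : q + q⁻¹ ≠ 0 := by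
  contrapose! h
  field_simp at h
  linear_combination h

theorem sub_inv_ne_zero_of_sq_ne_one (hq : q ≠ 0) (h : q ^ 2 ≠ 1) : q - q⁻¹ ≠ 0 := by
  contrapose! h
  field_simp at h
  linear_combination h

theorem zpow_two_sub_zpow_neg_two (hq : q ≠ 0) :
    q ^ (2 : ℤ) - q ^ (-2 : ℤ) = (q + q⁻¹) * (q - q⁻¹) := by
  field_simp
  ring

theorem zpow_two_sub_zpow_neg_two_ne_zero (hq : q ≠ 0) (h1 : q ^ 2 ≠ 1) (h2 : q ^ 2 ≠ -1) :
    q ^ (2 : ℤ) - q ^ (-2 : ℤ) ≠ 0 := by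
  rw [zpow_two_sub_zpow_neg_two hq]
  exact mul_ne_zero (add_inv_ne_zero_of_sq_ne_neg_one hq h2) (sub_inv_ne_zero_of_sq_ne_one hq h1)

theorem one_add_div_sub_inv_mul_eq_one (hq : q ≠ 0) (h1 : q ^ 2 ≠ 1) (h2 : q ^ 2 ≠ -1) (t : K) :
    (1 + t / (q + q⁻¹)) - (q ^ (2 : ℤ) - q ^ (-2 : ℤ))⁻¹ * (q * t - q⁻¹ * t) = 1 := by
  have hp := add_inv_ne_zero_of_sq_ne_neg_one hq h2
  have hm := sub_inv_ne_zero_of_sq_ne_one hq h1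
  rw [zpow_two_sub_zpow_neg_two hq]
  field_simp
  ring

theorem mul_theta_pred_sub_inv_mul_theta (hq : q ≠ 0) (a b : K) (D i : ℤ) :
    q * (a * q ^ (2 * (i - 1) - D) + b * q ^ (D - 2 * (i - 1)))
      - q⁻¹ * (a * q ^ (2 * i - D) + b * q ^ (D - 2 * i))
      = (q ^ (2 : ℤ) - q ^ (-2 : ℤ)) * (b * q ^ (D - 2 * i + 1)) := by
  simp only [zpow_add₀ hq, zpow_sub₀ hq, _root_.zpow_mul, mul_sub, mul_add, _root_.zpow_neg,
    zpow_one]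
  field_simp
  ring

theorem mul_theta_sub_inv_mul_theta_pred (hq : q ≠ 0) (a b : K) (D i : ℤ) :
    q * (a * q ^ (2 * i - D) + b * q ^ (D - 2 * i))
      - q⁻¹ * (a * q ^ (2 * (i - 1) - D) + b * q ^ (D - 2 * (i - 1)))
      = (q ^ (2 : ℤ) - q ^ (-2 : ℤ)) * (a * q ^ (2 * i - 1 - D)) := by
  simp only [zpow_sub₀ hq, _root_.zpow_mul, mul_sub, mul_add, _root_.zpow_neg, zpow_one]
  field_simp
  ring

theorem neg_one_zpow_mul_zpow_neg_mul_zpow_eq_pred_mul {a : K} (ha : a ≠ 0) (hq : q ≠ 0)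
    (D i : ℤ) :
    (-1) ^ i * (a ^ (-i) * q ^ (i * (D - i)))
      = (-1) ^ (i - 1) * (a ^ (-(i - 1)) * q ^ ((i - 1) * (D - (i - 1))))
        * -(a⁻¹ * q ^ (D - 2 * i + 1)) := by
  have e1 : (-1 : K) ^ i = (-1) ^ (i - 1) * -1 := by
    rw [← zpow_add_one₀ (by norm_num), sub_add_cancel]
  have e2 : a ^ (-i) = a ^ (-(i - 1)) * a⁻¹ := by
    rw [← _root_.zpow_neg_one, ← zpow_add₀ ha]
    ring_nf
  have e3 : q ^ (i * (D - i)) = q ^ ((i - 1) * (D - (i - 1))) * q ^ (D - 2 * i + 1) := by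
    rw [← zpow_add₀ hq]
    ring_nf
  rw [e1, e2, e3]
  ring

-- The coefficient of `E*_i A E*_j` in `C`.
def blockCoeff (q : K) (ϑ : ℤ → K) (i j : ℤ) : K :=
  (if i = j then 1 + ϑ j / (q + q⁻¹) else 0)
    - (q ^ (2 : ℤ) - q ^ (-2 : ℤ))⁻¹ * (q * ϑ j - q⁻¹ * ϑ i)

theorem blockCoeff_self (hq : q ≠ 0) (h1 : q ^ 2 ≠ 1) (h2 : q ^ 2 ≠ -1) (ϑ : ℤ → K) (i : ℤ) :
    blockCoeff q ϑ i i = 1 := by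
  rw [blockCoeff, if_pos rfl, one_add_div_sub_inv_mul_eq_one hq h1 h2]

variable {a : K} {D : ℤ} {ϑ : ℤ → K}

theorem blockCoeff_pred (hq : q ≠ 0) (h1 : q ^ 2 ≠ 1) (h2 : q ^ 2 ≠ -1)
    (hϑ : ∀ i, ϑ i = a * q ^ (2 * i - D) + a⁻¹ * q ^ (D - 2 * i)) (i : ℤ) :
    blockCoeff q ϑ i (i - 1) = -(a⁻¹ * q ^ (D - 2 * i + 1)) := by
  rw [blockCoeff, if_neg (by omega), hϑ, hϑ, mul_theta_pred_sub_inv_mul_theta hq,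
    inv_mul_cancel_left₀ (zpow_two_sub_zpow_neg_two_ne_zero hq h1 h2), zero_sub]

theorem blockCoeff_pred_self_eq_inv (hq : q ≠ 0) (h1 : q ^ 2 ≠ 1) (h2 : q ^ 2 ≠ -1)
    (hϑ : ∀ i, ϑ i = a * q ^ (2 * i - D) + a⁻¹ * q ^ (D - 2 * i)) (i : ℤ) :
    blockCoeff q ϑ (i - 1) i = (blockCoeff q ϑ i (i - 1))⁻¹ := by
  rw [blockCoeff_pred hq h1 h2 hϑ, blockCoeff, if_neg (by omega), hϑ, hϑ,
    mul_theta_sub_inv_mul_theta_pred hq,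
    inv_mul_cancel_left₀ (zpow_two_sub_zpow_neg_two_ne_zero hq h1 h2), zero_sub, inv_neg,
    mul_inv, inv_inv, ← _root_.zpow_neg]
  ring_nf

end Scalars

theorem forall_mem_Icc_eq_mul_iff_div_eq {K : Type*} [Field K] {D : ℤ} {f g r : ℤ → K}
    (hf : ∀ i ∈ Icc 0 D, f i ≠ 0) (hg0 : g 0 = 1)
    (hg : ∀ i, 1 ≤ i → i ≤ D → g i = g (i - 1) * r i) :
    (∀ i ∈ Icc 0 D, f i = f 0 * g i) ↔ ∀ i, 1 ≤ i → i ≤ D → f i / f (i - 1) = r i := by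
  constructor
  · intro h i h1 hD
    have hprev : i - 1 ∈ Icc 0 D := mem_Icc.2 ⟨by omega, by omega⟩
    rw [div_eq_iff (hf _ hprev), h i (mem_Icc.2 ⟨by omega, hD⟩), hg i h1 hD, h _ hprev]
    ring
  · intro h i hi
    obtain ⟨h0, hD⟩ := mem_Icc.1 hi
    clear hi
    induction i, h0 using Int.leInduction with
    | base => rw [hg0, mul_one]
    | succ n hn ih =>
      have hstep := h (n + 1) (by omega) hD
      rw [add_sub_cancel_right, div_eq_iff (hf n (mem_Icc.2 ⟨hn, by omega⟩))] at hstep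
      rw [hstep, ih (by omega), hg (n + 1) (by omega) hD, add_sub_cancel_right]
      ring

theorem forall_mem_Icc_abs_sub_eq_one_iff (D : ℤ) (P : ℤ → ℤ → Prop) :
    (∀ i ∈ Icc 0 D, ∀ j ∈ Icc 0 D, |i - j| = 1 → P i j) ↔
      ∀ i, 1 ≤ i → i ≤ D → P i (i - 1) ∧ P (i - 1) i := by
  constructor
  · intro h i h1 hD
    exact ⟨h i (mem_Icc.2 ⟨by omega, hD⟩) (i - 1) (mem_Icc.2 ⟨by omega, by omega⟩) (by simp),
      h (i - 1) (mem_Icc.2 ⟨by omega, by omega⟩) i (mem_Icc.2 ⟨by omega, hD⟩) (by simp)⟩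
  · intro h i hi j hj hij
    rw [mem_Icc] at hi hj
    rcases abs_eq (zero_le_one' ℤ) |>.1 hij with hij | hij
    · obtain rfl : j = i - 1 := by omega
      exact (h i (by omega) hi.2).1
    · obtain rfl : i = j - 1 := by omega
      exact (h j (by omega) hj.2).2

section OrthogonalIdempotents

variable {ι 𝕜 R : Type*} [Ring R] {E : ι → R} {S : Finset ι}

theorem eq_sum_sum_mul_mul (hsum : ∑ i ∈ S, E i = 1) (x : R) :
    x = ∑ i ∈ S, ∑ j ∈ S, E i * x * E j := by
  calc x = (∑ i ∈ S, E i) * x * ∑ j ∈ S, E j := by rw [hsum, one_mul, mul_one]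
    _ = _ := by simp only [sum_mul, mul_sum]; exact sum_comm

theorem eq_of_forall_mul_mul_eq (hsum : ∑ i ∈ S, E i = 1) {x y : R}
    (h : ∀ i ∈ S, ∀ j ∈ S, E i * x * E j = E i * y * E j) : x = y := by
  rw [eq_sum_sum_mul_mul hsum x, eq_sum_sum_mul_mul hsum y]
  exact sum_congr rfl fun i hi => sum_congr rfl fun j hj => h i hi j hj

variable [DecidableEq ι]

section CommRing

variable [CommRing 𝕜] [Algebra 𝕜 R]

theorem mul_sum_smul_of_orthogonal
    (hE : ∀ i ∈ S, ∀ j ∈ S, E i * E j = if i = j then E i else 0)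
    (c : ι → 𝕜) {i : ι} (hi : i ∈ S) : E i * ∑ k ∈ S, c k • E k = c i • E i := by
  rw [mul_sum, sum_eq_single_of_mem i hi fun k hk hki => ?_, mul_smul_comm, hE i hi i hi,
    if_pos rfl]
  rw [mul_smul_comm, hE i hi k hk, if_neg hki.symm, smul_zero]

theorem sum_smul_mul_of_orthogonal
    (hE : ∀ i ∈ S, ∀ j ∈ S, E i * E j = if i = j then E i else 0)
    (c : ι → 𝕜) {j : ι} (hj : j ∈ S) : (∑ k ∈ S, c k • E k) * E j = c j • E j := by
  rw [sum_mul, sum_eq_single_of_mem j hj fun k hk hkj => ?_, smul_mul_assoc, hE j hj j hj,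
    if_pos rfl]
  rw [smul_mul_assoc, hE k hk j hj, if_neg hkj, smul_zero]

theorem mul_sum_smul_mul_sum_smul_mul
    (hE : ∀ i ∈ S, ∀ j ∈ S, E i * E j = if i = j then E i else 0)
    {i j : ι} (hi : i ∈ S) (hj : j ∈ S) (α β : ι → 𝕜) (A : R) :
    E i * ((∑ k ∈ S, α k • E k) * A * ∑ k ∈ S, β k • E k) * E j
      = (α i * β j) • (E i * A * E j) := by
  simp only [← mul_assoc, mul_sum_smul_of_orthogonal hE α hi]
  simp only [mul_assoc, sum_smul_mul_of_orthogonal hE β hj]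
  simp only [smul_mul_assoc, mul_smul_comm, smul_smul, mul_comm (β j)]

theorem mul_mul_eq_ite_smul_of_mul_eq
    (hE : ∀ i ∈ S, ∀ j ∈ S, E i * E j = if i = j then E i else 0)
    {i j : ι} (hi : i ∈ S) (hj : j ∈ S) {Z A : R} {z : 𝕜}
    (hZ : Z * E j = z • (E j * A * E j)) :
    E i * Z * E j = (if i = j then z else 0) • (E i * A * E j) := by
  rw [mul_assoc, hZ, mul_smul_comm, ← mul_assoc, ← mul_assoc, hE i hi j hj]
  split_ifs with hij
  · rw [hij]
  · simp

theorem mul_sub_smul_sub_smul_mul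
    (hE : ∀ i ∈ S, ∀ j ∈ S, E i * E j = if i = j then E i else 0)
    {i j : ι} (hi : i ∈ S) (hj : j ∈ S) {Z A : R} {z : 𝕜}
    (hZ : Z * E j = z • (E j * A * E j)) (ϑ : ι → 𝕜) (κ s t : 𝕜) :
    E i * (Z - κ • (s • (A * ∑ k ∈ S, ϑ k • E k) - t • ((∑ k ∈ S, ϑ k • E k) * A))) * E j
      = ((if i = j then z else 0) - κ * (s * ϑ j - t * ϑ i)) • (E i * A * E j) := by
  have hAB : E i * (A * ∑ k ∈ S, ϑ k • E k) * E j = ϑ j • (E i * A * E j) := by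
    rw [mul_assoc, mul_assoc, sum_smul_mul_of_orthogonal hE ϑ hj, mul_smul_comm, mul_smul_comm,
      ← mul_assoc]
  have hBA : E i * ((∑ k ∈ S, ϑ k • E k) * A) * E j = ϑ i • (E i * A * E j) := by
    rw [← mul_assoc, mul_sum_smul_of_orthogonal hE ϑ hi, smul_mul_assoc, smul_mul_assoc]
  simp only [mul_sub, sub_mul, mul_smul_comm, smul_mul_assoc, hAB, hBA,
    mul_mul_eq_ite_smul_of_mul_eq hE hi hj hZ]
  module

end CommRing

variable [Field 𝕜] [Algebra 𝕜 R]

theorem sum_smul_mul_sum_inv_smul (hsum : ∑ i ∈ S, E i = 1)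
    (hE : ∀ i ∈ S, ∀ j ∈ S, E i * E j = if i = j then E i else 0)
    {α : ι → 𝕜} (hα : ∀ i ∈ S, α i ≠ 0) :
    (∑ i ∈ S, α i • E i) * ∑ i ∈ S, (α i)⁻¹ • E i = 1 := by
  rw [sum_mul, ← hsum]
  refine sum_congr rfl fun i hi => ?_
  rw [smul_mul_assoc, mul_sum_smul_of_orthogonal hE _ hi, smul_smul, mul_inv_cancel₀ (hα i hi),
    one_smul]

end OrthogonalIdempotents

theorem sum_smul_mul_mul_sum_inv_smul_eq_iff {𝕜 R : Type*} [Field 𝕜] [Ring R] [Algebra 𝕜 R]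
    {E : ℤ → R} {S : Finset ℤ} (hsum : ∑ i ∈ S, E i = 1)
    (hE : ∀ i ∈ S, ∀ j ∈ S, E i * E j = if i = j then E i else 0)
    {α : ℤ → 𝕜} (hα : ∀ i ∈ S, α i ≠ 0) {A C : R} {c : ℤ → ℤ → 𝕜}
    (hC : ∀ i ∈ S, ∀ j ∈ S, E i * C * E j = c i j • (E i * A * E j))
    (hdiag : ∀ i ∈ S, c i i = 1)
    (hfar : ∀ i ∈ S, ∀ j ∈ S, 1 < |i - j| → E i * A * E j = 0)
    (hnear : ∀ i ∈ S, ∀ j ∈ S, |i - j| = 1 → E i * A * E j ≠ 0) :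
    (∑ i ∈ S, α i • E i) * A * (∑ i ∈ S, (α i)⁻¹ • E i) = C ↔
      ∀ i ∈ S, ∀ j ∈ S, |i - j| = 1 → α i / α j = c i j := by
  have hconj : ∀ i ∈ S, ∀ j ∈ S,
      E i * ((∑ k ∈ S, α k • E k) * A * ∑ k ∈ S, (α k)⁻¹ • E k) * E j
        = (α i / α j) • (E i * A * E j) := fun i hi j hj => by
    rw [mul_sum_smul_mul_sum_smul_mul hE hi hj, div_eq_mul_inv]
  constructor
  · rintro rfl i hi j hj hij
    have h := hC i hi j hj
    rw [hconj i hi j hj] at h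
    exact smul_left_injective 𝕜 (hnear i hi j hj hij) h
  · intro h
    refine eq_of_forall_mul_mul_eq hsum fun i hi j hj => ?_
    rw [hconj i hi j hj, hC i hi j hj]
    by_cases hij : i = j
    · rw [hij, div_self (hα j hj), hdiag j hj]
    obtain hij | hij := (Int.one_le_abs (sub_ne_zero.2 hij)).eq_or_lt
    · rw [h i hi j hj hij.symm]
    · rw [hfar i hi j hj hij, smul_zero, smul_zero]

theorem intertwiner_characterization_Mstar_general
    {X : Type*} [Fintype X] [DecidableEq X]
    (D : ℤ) (q a : ℂ) (hq : q ≠ 0) (ha : a ≠ 0)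
    (hq1 : q ^ 2 ≠ 1) (hq2 : q ^ 2 ≠ -1)
    (ϑ : ℤ → ℂ)
    (hϑ : ∀ i : ℤ, ϑ i = a * q ^ (2 * i - D) + a⁻¹ * q ^ (D - 2 * i))
    (Estar : ℤ → Matrix X X ℂ)
    (hEssum : ∑ i ∈ Finset.Icc (0 : ℤ) D, Estar i = 1)
    (hEsmul : ∀ i ∈ Finset.Icc (0 : ℤ) D, ∀ j ∈ Finset.Icc (0 : ℤ) D,
      Estar i * Estar j = if i = j then Estar i else 0)
    (A : Matrix X X ℂ)
    (htriEs : ∀ i ∈ Finset.Icc (0 : ℤ) D, ∀ j ∈ Finset.Icc (0 : ℤ) D,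
      1 < |i - j| → Estar i * A * Estar j = 0)
    (B : Matrix X X ℂ)
    (hB : B = ∑ i ∈ Finset.Icc (0 : ℤ) D, ϑ i • Estar i)
    (Z : Matrix X X ℂ)
    (hZEs : ∀ i ∈ Finset.Icc (0 : ℤ) D,
      Z * Estar i = (1 + ϑ i / (q + q⁻¹)) • (Estar i * A * Estar i) ∧
      Estar i * Z = (1 + ϑ i / (q + q⁻¹)) • (Estar i * A * Estar i))
    (C : Matrix X X ℂ)
    (hC : C = Z - (q ^ (2 : ℤ) - q ^ (-2 : ℤ))⁻¹ • (q • (A * B) - q⁻¹ • (B * A)))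
    (αs : ℤ → ℂ) (hαs : ∀ i ∈ Finset.Icc (0 : ℤ) D, αs i ≠ 0)
    (Wstar : Matrix X X ℂ)
    (hWstar : Wstar = ∑ i ∈ Finset.Icc (0 : ℤ) D, αs i • Estar i)
    (hind : LinearIndependent ℂ
      (fun p : {p : ℤ × ℤ // p.1 ∈ Finset.Icc (0 : ℤ) D ∧
          p.2 ∈ Finset.Icc (0 : ℤ) D ∧ |p.1 - p.2| = 1} =>
        Estar p.val.1 * A * Estar p.val.2)) :
    (Wstar * A * Wstar⁻¹ = C ↔
      ∀ i ∈ Finset.Icc (0 : ℤ) D,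
        αs i = αs 0 * (-1 : ℂ) ^ i * a ^ (-i) * q ^ (i * (D - i))) ∧
    ((∀ i ∈ Finset.Icc (0 : ℤ) D,
        αs i = αs 0 * (-1 : ℂ) ^ i * a ^ (-i) * q ^ (i * (D - i))) ↔
      ∀ i : ℤ, 1 ≤ i → i ≤ D →
        αs i / αs (i - 1) = -(a⁻¹ * q ^ (D - 2 * i + 1))) := by
  have hCblock : ∀ i ∈ Icc 0 D, ∀ j ∈ Icc 0 D,
      Estar i * C * Estar j = blockCoeff q ϑ i j • (Estar i * A * Estar j) := fun i hi j hj => by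
    rw [hC, hB]
    exact mul_sub_smul_sub_smul_mul hEsmul hi hj (hZEs j hj).1 ϑ _ _ _
  have hnear : ∀ i ∈ Icc 0 D, ∀ j ∈ Icc 0 D, |i - j| = 1 → Estar i * A * Estar j ≠ 0 :=
    fun i hi j hj hij => (hind.ne_zero ⟨(i, j), hi, hj, hij⟩ :)
  have hclosed : (∀ i ∈ Icc 0 D, αs i = αs 0 * (-1 : ℂ) ^ i * a ^ (-i) * q ^ (i * (D - i))) ↔
      ∀ i : ℤ, 1 ≤ i → i ≤ D → αs i / αs (i - 1) = -(a⁻¹ * q ^ (D - 2 * i + 1)) := by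
    simp only [mul_assoc]
    exact forall_mem_Icc_eq_mul_iff_div_eq hαs (by simp)
      fun i _ _ => neg_one_zpow_mul_zpow_neg_mul_zpow_eq_pred_mul ha hq D i
  refine ⟨?_, hclosed⟩
  rw [hclosed, hWstar, inv_eq_right_inv (sum_smul_mul_sum_inv_smul hEssum hEsmul hαs),
    sum_smul_mul_mul_sum_inv_smul_eq_iff hEssum hEsmul hαs hCblock
      (fun i _ => blockCoeff_self hq hq1 hq2 ϑ i) htriEs hnear,
    forall_mem_Icc_abs_sub_eq_one_iff]
  refine forall_congr' fun i => imp_congr_right fun _ => imp_congr_right fun _ => ?_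
  rw [blockCoeff_pred_self_eq_inv hq hq1 hq2 hϑ, ← inv_div (αs i), _root_.inv_inj, and_self,
    blockCoeff_pred hq hq1 hq2 hϑ]

theorem intertwiner_characterization_Mstar
    {X : Type*} [Fintype X] [DecidableEq X] [Nonempty X]
    (D : ℤ) (hD : 3 ≤ D) (q a : ℂ) (hq : q ≠ 0) (ha : a ≠ 0)
    (hq1 : q ^ 2 ≠ 1) (hq2 : q ^ 2 ≠ -1)
    (ϑ : ℤ → ℂ)
    (hϑ : ∀ i : ℤ, ϑ i = a * q ^ (2 * i - D) + a⁻¹ * q ^ (D - 2 * i))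
    (β : ℂ) (hβ : β = q ^ (2 : ℤ) + q ^ (-2 : ℤ))
    (Estar : ℤ → Matrix X X ℂ)
    (hEssum : ∑ i ∈ Finset.Icc (0 : ℤ) D, Estar i = 1)
    (hEsmul : ∀ i ∈ Finset.Icc (0 : ℤ) D, ∀ j ∈ Finset.Icc (0 : ℤ) D,
      Estar i * Estar j = if i = j then Estar i else 0)
    (A : Matrix X X ℂ)
    (htriEs : ∀ i ∈ Finset.Icc (0 : ℤ) D, ∀ j ∈ Finset.Icc (0 : ℤ) D,
      1 < |i - j| → Estar i * A * Estar j = 0)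
    (B : Matrix X X ℂ)
    (hB : B = ∑ i ∈ Finset.Icc (0 : ℤ) D, ϑ i • Estar i)
    (Z : Matrix X X ℂ)
    (hZEs : ∀ i ∈ Finset.Icc (0 : ℤ) D,
      Z * Estar i = (1 + ϑ i / (q + q⁻¹)) • (Estar i * A * Estar i) ∧
      Estar i * Z = (1 + ϑ i / (q + q⁻¹)) • (Estar i * A * Estar i))
    (C : Matrix X X ℂ)
    (hC : C = Z - (q ^ (2 : ℤ) - q ^ (-2 : ℤ))⁻¹ • (q • (A * B) - q⁻¹ • (B * A)))
    (αs : ℤ → ℂ) (hαs : ∀ i ∈ Finset.Icc (0 : ℤ) D, αs i ≠ 0)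
    (Wstar : Matrix X X ℂ)
    (hWstar : Wstar = ∑ i ∈ Finset.Icc (0 : ℤ) D, αs i • Estar i)
    (hind : LinearIndependent ℂ
      (fun p : {p : ℤ × ℤ // p.1 ∈ Finset.Icc (0 : ℤ) D ∧
          p.2 ∈ Finset.Icc (0 : ℤ) D ∧ |p.1 - p.2| = 1} =>
        Estar p.val.1 * A * Estar p.val.2)) :
    (Wstar * A * Wstar⁻¹ = C ↔
      ∀ i ∈ Finset.Icc (0 : ℤ) D,
        αs i = αs 0 * (-1 : ℂ) ^ i * a ^ (-i) * q ^ (i * (D - i))) ∧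
    ((∀ i ∈ Finset.Icc (0 : ℤ) D,
        αs i = αs 0 * (-1 : ℂ) ^ i * a ^ (-i) * q ^ (i * (D - i))) ↔
      ∀ i : ℤ, 1 ≤ i → i ≤ D →
        αs i / αs (i - 1) = -(a⁻¹ * q ^ (D - 2 * i + 1))) :=
  intertwiner_characterization_Mstar_general D q a hq ha hq1 hq2 ϑ hϑ Estar hEssum hEsmul A htriEs B
    hB Z hZEs C hC αs hαs Wstar hWstar hind
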